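/- Monotone l'Hôpital's Rule: Let -∞ < a < b < ∞, and let g, h be continuous on [a,b] and differentiable on (a,b) with h' ≠ 0 on (a,b). If g'/h' is strictly increasing on (a,b), then x ↦ (g(x) - g(a))/(h(x) - h(a)) and x ↦ (g(x) - g(b))/(h(x) - h(b)) are strictly increasing on (a,b); similarly with 'decreasing' in place of 'increasing'. -/

import Mathlib

/-!
Fix an endpoint `e ∈ {a, b}` and put `F x = (g x - g e) / (h x - h e)`. Then
`F' = h' / (h - h e) * (g' / h' - F)`, and Cauchy's mean value theorem on the interval between
`e` and `x` gives `F x = g' c / h' c` for some `c` strictly between them. By Darboux's theorem `h'`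
has constant sign, so `h` is strictly monotone and `h' x / (h x - h e)` is positive for `e = a`
and negative for `e = b`. In both cases the monotonicity of `g' / h'` gives `F' > 0`. The
decreasing case follows by replacing `g` with `-g`.
-/

open Set

section

variable {f f' g h g' h' : ℝ → ℝ} {a b x : ℝ}

lemma strictMonoOn_of_hasDerivAt_pos {s : Set ℝ} (hs : Convex ℝ s) (hf : ContinuousOn f s)
    (hf' : ∀ x ∈ interior s, HasDerivAt f (f' x) x) (hpos : ∀ x ∈ interior s, 0 < f' x) :
    StrictMonoOn f s :=
  strictMonoOn_of_deriv_pos hs hf fun x hx => (hf' x hx).deriv ▸ hpos x hx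

lemma strictAntiOn_of_hasDerivAt_neg {s : Set ℝ} (hs : Convex ℝ s) (hf : ContinuousOn f s)
    (hf' : ∀ x ∈ interior s, HasDerivAt f (f' x) x) (hneg : ∀ x ∈ interior s, f' x < 0) :
    StrictAntiOn f s :=
  strictAntiOn_of_deriv_neg hs hf fun x hx => (hf' x hx).deriv ▸ hneg x hx

lemma strictMonoOn_or_strictAntiOn_of_deriv_ne_zero (hh : ContinuousOn h (Icc a b))
    (hhd : ∀ x ∈ Ioo a b, HasDerivAt h (h' x) x) (hh' : ∀ x ∈ Ioo a b, h' x ≠ 0) :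
    (∀ x ∈ Ioo a b, 0 < h' x) ∧ StrictMonoOn h (Icc a b) ∨
      (∀ x ∈ Ioo a b, h' x < 0) ∧ StrictAntiOn h (Icc a b) := by
  have hhd' : ∀ x ∈ interior (Icc a b), HasDerivAt h (h' x) x := by rwa [interior_Icc]
  rcases hasDerivWithinAt_forall_lt_or_forall_gt_of_forall_ne (convex_Ioo a b)
    (fun x hx => (hhd x hx).hasDerivWithinAt) hh' with hneg | hpos
  · exact .inr ⟨hneg, strictAntiOn_of_hasDerivAt_neg (convex_Icc a b) hh hhd'
      (by rwa [interior_Icc])⟩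
  · exact .inl ⟨hpos, strictMonoOn_of_hasDerivAt_pos (convex_Icc a b) hh hhd'
      (by rwa [interior_Icc])⟩

lemma div_sub_left_pos_and_div_sub_right_neg (hh : ContinuousOn h (Icc a b))
    (hhd : ∀ x ∈ Ioo a b, HasDerivAt h (h' x) x) (hh' : ∀ x ∈ Ioo a b, h' x ≠ 0)
    (hx : x ∈ Ioo a b) : 0 < h' x / (h x - h a) ∧ h' x / (h x - h b) < 0 := by
  have hab : a ≤ b := (hx.1.trans hx.2).le
  rcases strictMonoOn_or_strictAntiOn_of_deriv_ne_zero hh hhd hh' with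
    ⟨hpos, hmono⟩ | ⟨hneg, hanti⟩
  · exact ⟨div_pos (hpos x hx)
        (sub_pos.2 (hmono (left_mem_Icc.2 hab) (Ioo_subset_Icc_self hx) hx.1)),
      div_neg_of_pos_of_neg (hpos x hx)
        (sub_neg.2 (hmono (Ioo_subset_Icc_self hx) (right_mem_Icc.2 hab) hx.2))⟩
  · exact ⟨div_pos_of_neg_of_neg (hneg x hx)
        (sub_neg.2 (hanti (left_mem_Icc.2 hab) (Ioo_subset_Icc_self hx) hx.1)),
      div_neg_of_neg_of_pos (hneg x hx)
        (sub_pos.2 (hanti (Ioo_subset_Icc_self hx) (right_mem_Icc.2 hab) hx.2))⟩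

lemma hasDerivAt_slope_ratio (e : ℝ) (hg : HasDerivAt g (g' x) x) (hh : HasDerivAt h (h' x) x)
    (hx : h x ≠ h e) (hh'x : h' x ≠ 0) :
    HasDerivAt (fun y => (g y - g e) / (h y - h e))
      (h' x / (h x - h e) * (g' x / h' x - (g x - g e) / (h x - h e))) x := by
  refine ((hg.sub_const (g e)).fun_div (hh.sub_const (h e)) (sub_ne_zero.2 hx)).congr_deriv ?_
  field_simp

lemma exists_slope_ratio_eq_deriv_ratio {x y : ℝ} (hx : x ∈ Icc a b) (hy : y ∈ Icc a b)
    (hxy : x < y)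
    (hg : ContinuousOn g (Icc a b)) (hh : ContinuousOn h (Icc a b))
    (hgd : ∀ x ∈ Ioo a b, HasDerivAt g (g' x) x) (hhd : ∀ x ∈ Ioo a b, HasDerivAt h (h' x) x)
    (hh' : ∀ x ∈ Ioo a b, h' x ≠ 0) (hne : h x ≠ h y) :
    ∃ c ∈ Ioo x y, (g y - g x) / (h y - h x) = g' c / h' c := by
  have hsub : Ioo x y ⊆ Ioo a b := Ioo_subset_Ioo hx.1 hy.2
  obtain ⟨c, hc, hcauchy⟩ := exists_ratio_hasDerivAt_eq_ratio_slope g g' hxy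
    (hg.mono (Icc_subset_Icc hx.1 hy.2)) (fun z hz => hgd z (hsub hz)) h h'
    (hh.mono (Icc_subset_Icc hx.1 hy.2)) (fun z hz => hhd z (hsub hz))
  refine ⟨c, hc, ?_⟩
  rw [div_eq_div_iff (sub_ne_zero.2 hne.symm) (hh' c (hsub hc))]
  linarith

lemma strictMonoOn_slope_ratio_of_pos (e : ℝ) (hgd : ∀ x ∈ Ioo a b, HasDerivAt g (g' x) x)
    (hhd : ∀ x ∈ Ioo a b, HasDerivAt h (h' x) x) (hh' : ∀ x ∈ Ioo a b, h' x ≠ 0)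
    (hpos : ∀ x ∈ Ioo a b, 0 < h' x / (h x - h e) * (g' x / h' x - (g x - g e) / (h x - h e))) :
    StrictMonoOn (fun x => (g x - g e) / (h x - h e)) (Ioo a b) := by
  have hderiv : ∀ x ∈ Ioo a b, HasDerivAt (fun y => (g y - g e) / (h y - h e))
      (h' x / (h x - h e) * (g' x / h' x - (g x - g e) / (h x - h e))) x := fun x hx =>
    -- if `h x = h e`, the first factor of `hpos x hx` is `h' x / 0 = 0`
    hasDerivAt_slope_ratio e (hgd x hx) (hhd x hx)
      (fun heq => by simpa [heq] using hpos x hx) (hh' x hx)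
  exact strictMonoOn_of_hasDerivAt_pos (convex_Ioo a b)
    (fun x hx => (hderiv x hx).continuousAt.continuousWithinAt) (by rwa [interior_Ioo])
    (by rwa [interior_Ioo])

theorem strictMonoOn_slope_ratio (hg : ContinuousOn g (Icc a b)) (hh : ContinuousOn h (Icc a b))
    (hgd : ∀ x ∈ Ioo a b, HasDerivAt g (g' x) x) (hhd : ∀ x ∈ Ioo a b, HasDerivAt h (h' x) x)
    (hh' : ∀ x ∈ Ioo a b, h' x ≠ 0) (hmono : StrictMonoOn (fun x => g' x / h' x) (Ioo a b)) :
    StrictMonoOn (fun x => (g x - g a) / (h x - h a)) (Ioo a b) ∧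
      StrictMonoOn (fun x => (g x - g b) / (h x - h b)) (Ioo a b) := by
  refine ⟨strictMonoOn_slope_ratio_of_pos a hgd hhd hh' fun x hx => ?_,
    strictMonoOn_slope_ratio_of_pos b hgd hhd hh' fun x hx => ?_⟩
  · have hpos := (div_sub_left_pos_and_div_sub_right_neg hh hhd hh' hx).1
    obtain ⟨c, hc, hratio⟩ := exists_slope_ratio_eq_deriv_ratio
      (left_mem_Icc.2 (hx.1.trans hx.2).le) (Ioo_subset_Icc_self hx) hx.1 hg hh hgd hhd hh'
      (fun heq => by simp [heq] at hpos)
    rw [hratio]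
    exact mul_pos hpos (sub_pos.2 (hmono ⟨hc.1, hc.2.trans hx.2⟩ hx hc.2))
  · have hneg := (div_sub_left_pos_and_div_sub_right_neg hh hhd hh' hx).2
    obtain ⟨c, hc, hratio⟩ := exists_slope_ratio_eq_deriv_ratio
      (Ioo_subset_Icc_self hx) (right_mem_Icc.2 (hx.1.trans hx.2).le) hx.2 hg hh hgd hhd hh'
      (fun heq => by simp [heq] at hneg)
    have hratio' : (g x - g b) / (h x - h b) = g' c / h' c := by
      rw [← hratio, ← neg_div_neg_eq, neg_sub, neg_sub]
    rw [hratio']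
    exact mul_pos_of_neg_of_neg hneg (sub_neg.2 (hmono hx ⟨hx.1.trans hc.1, hc.2⟩ hc.1))

end

theorem monotone_lhopital_rule (a b : ℝ) (g h g' h' : ℝ → ℝ)
    (hg : ContinuousOn g (Set.Icc a b)) (hh : ContinuousOn h (Set.Icc a b))
    (hgd : ∀ x ∈ Set.Ioo a b, HasDerivAt g (g' x) x)
    (hhd : ∀ x ∈ Set.Ioo a b, HasDerivAt h (h' x) x)
    (hh' : ∀ x ∈ Set.Ioo a b, h' x ≠ 0) :
    (StrictMonoOn (fun x => g' x / h' x) (Set.Ioo a b) →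
      StrictMonoOn (fun x => (g x - g a) / (h x - h a)) (Set.Ioo a b) ∧
      StrictMonoOn (fun x => (g x - g b) / (h x - h b)) (Set.Ioo a b)) ∧
    (StrictAntiOn (fun x => g' x / h' x) (Set.Ioo a b) →
      StrictAntiOn (fun x => (g x - g a) / (h x - h a)) (Set.Ioo a b) ∧
      StrictAntiOn (fun x => (g x - g b) / (h x - h b)) (Set.Ioo a b)) := by
  refine ⟨strictMonoOn_slope_ratio hg hh hgd hhd hh', fun hanti => ?_⟩
  have hneg_mono : StrictMonoOn (fun x => -g' x / h' x) (Ioo a b) := by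
    simpa only [neg_div] using hanti.neg
  obtain ⟨ha, hb⟩ := strictMonoOn_slope_ratio hg.neg hh (fun x hx => (hgd x hx).neg) hhd hh'
    hneg_mono
  have hslope_neg : ∀ e, (fun x => ((-g) x - (-g) e) / (h x - h e)) =
      fun x => -((g x - g e) / (h x - h e)) := fun e => funext fun x => by
    simp only [Pi.neg_apply]
    ring
  simp only [hslope_neg] at ha hb
  simpa only [neg_neg] using And.intro ha.neg hb.neg
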